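/- arXiv:2103.09159 — 2 statements merged into one kernel-verified Lean document; each statement's English description precedes it below -/
import Mathlib

section
/- If φ is bounded and γ ∈ (0,1), and the shaping rewards are only active on finitely many disjoint intervals [τ_{2k−1}, τ_{2k}) with φ evaluated at value 0 at each interval endpoint (where φ(s,0) = 0 by assumption), then the total discounted sum of shaping rewards Σ_t γ^t F_t equals zero. -/
lemma telescope_Ioc (f : ℕ → ℝ) : ∀ m n : ℕ, m ≤ n →
    ∑ t ∈ Finset.Ioc m n, (f t - f (t - 1)) = f n - f m := by
  intro m n h
  induction n, h using Nat.le_induction with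
  | base => simp
  | succ n hmn ih =>
    rw [Finset.sum_Ioc_succ_top hmn, ih]
    simp

/-- If `φ` is bounded, `γ ∈ (0,1)`, `φ(s, 0) = 0` for all `s`, the action at every switching time
is `0`, and the shaping rewards `F_t = φ(s_t, a_t) − γ⁻¹ φ(s_{t−1}, a_{t−1})` are only active
on the finitely many disjoint intervals `(τ_{2k}, τ_{2k+1}]`, `k < K`, then the total discounted
sum of shaping rewards `Σ_t γ^t F_t` over the active times equals zero. -/
theorem stmt_4 {S A : Type*} (φ : S → A → ℝ) (a0 : A)
    (hφ0 : ∀ s, φ s a0 = 0) (hbdd : ∃ M, ∀ s a, |φ s a| ≤ M)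
    (γ : ℝ) (hγ0 : 0 < γ) (hγ1 : γ < 1)
    (s : ℕ → S) (a : ℕ → A) (τ : ℕ → ℕ) (hτ : StrictMono τ)
    (hswitch : ∀ k, a (τ k) = a0) (K : ℕ) :
    ∑ k ∈ Finset.range K, ∑ t ∈ Finset.Ioc (τ (2 * k)) (τ (2 * k + 1)),
        γ ^ t * (φ (s t) (a t) - γ⁻¹ * φ (s (t - 1)) (a (t - 1))) = 0 := by
  apply Finset.sum_eq_zero
  intro k _
  set f : ℕ → ℝ := fun t => γ ^ t * φ (s t) (a t) with hf
  have key : ∀ t ∈ Finset.Ioc (τ (2 * k)) (τ (2 * k + 1)),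
      γ ^ t * (φ (s t) (a t) - γ⁻¹ * φ (s (t - 1)) (a (t - 1))) = f t - f (t - 1) := by
    intro t ht
    have ht1 : 1 ≤ t := Nat.one_le_iff_ne_zero.mpr (by
      rintro rfl; exact absurd (Finset.mem_Ioc.mp ht).1 (Nat.not_lt_zero _))
    have : γ ^ t * γ⁻¹ = γ ^ (t - 1) := by
      rw [← zpow_natCast, ← zpow_natCast, ← zpow_neg_one, ← zpow_add₀ hγ0.ne']
      congr 1
      omega
    simp only [hf, mul_sub, ← mul_assoc, this]
  rw [Finset.sum_congr rfl key, telescope_Ioc f _ _ (le_of_lt (hτ (by omega)))]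
  simp [hf, hswitch, hφ0]
end

section
/- Fixed point error bound under projection: let Π be an orthogonal projection onto a closed subspace of a Hilbert space, and let F be a γ-contraction (γ ∈ (0,1)) with fixed point Q*. If Φr* is a fixed point of Π∘F, then ‖Φr* − Q*‖ ≤ (1 − γ²)^{−1/2} ‖ΠQ* − Q*‖. -/
/-!
Write `P` for the projection onto `K`. Since `Φr = P (F Φr)` and `P Qstar = P (F Qstar)`, and `P` is
nonexpansive, `‖Φr - P Qstar‖ ≤ γ ‖Φr - Qstar‖`. On the other hand `Φr - P Qstar ∈ K` is orthogonal
to `P Qstar - Qstar ∈ Kᗮ`, so Pythagoras gives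
`‖Φr - Qstar‖² = ‖Φr - P Qstar‖² + ‖P Qstar - Qstar‖² ≤ γ² ‖Φr - Qstar‖² + ‖P Qstar - Qstar‖²`.
-/

namespace Submodule

variable {𝕜 E : Type*} [RCLike 𝕜] [NormedAddCommGroup E] [InnerProductSpace 𝕜 E]
  (K : Submodule 𝕜 E) [K.HasOrthogonalProjection]

theorem norm_sub_sq_eq_add_norm_sub_starProjection_sq {y : E} (hy : y ∈ K) (x : E) :
    ‖y - x‖ ^ 2 = ‖y - K.starProjection x‖ ^ 2 + ‖K.starProjection x - x‖ ^ 2 := by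
  have horth : inner 𝕜 (y - K.starProjection x) (K.starProjection x - x) = 0 := by
    rw [← neg_sub x, inner_neg_right, neg_eq_zero]
    exact K.inner_right_of_mem_orthogonal (K.sub_mem hy (K.starProjection_apply_mem x))
      (K.sub_starProjection_mem_orthogonal x)
  rw [← sub_add_sub_cancel y (K.starProjection x) x, sq, sq, sq,
    norm_add_sq_eq_norm_sq_add_norm_sq_of_inner_eq_zero _ _ horth]

theorem norm_sub_starProjection_le_of_isFixedPt {F : E → E} {γ : ℝ}
    (hF : ∀ u v, ‖F u - F v‖ ≤ γ * ‖u - v‖) {x q : E}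
    (hx : K.starProjection (F x) = x) (hq : F q = q) :
    ‖x - K.starProjection q‖ ≤ γ * ‖x - q‖ :=
  calc ‖x - K.starProjection q‖ = ‖K.starProjection (F x - F q)‖ := by rw [map_sub, hx, hq]
    _ ≤ ‖F x - F q‖ := K.norm_starProjection_apply_le _
    _ ≤ γ * ‖x - q‖ := hF x q

end Submodule

theorem le_inv_sqrt_mul_of_mul_sq_le_sq {t a b : ℝ} (ht : 0 < t) (hb : 0 ≤ b)
    (h : t * a ^ 2 ≤ b ^ 2) : a ≤ (√t)⁻¹ * b := by
  rw [le_inv_mul_iff₀ (Real.sqrt_pos.mpr ht)]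
  calc √t * a ≤ √t * |a| := mul_le_mul_of_nonneg_left (le_abs_self a) (Real.sqrt_nonneg t)
    _ = √(t * a ^ 2) := by rw [Real.sqrt_mul ht.le, Real.sqrt_sq_eq_abs]
    _ ≤ √(b ^ 2) := Real.sqrt_le_sqrt h
    _ = b := Real.sqrt_sq hb

theorem stmt_11_general {H : Type*} [NormedAddCommGroup H] [InnerProductSpace ℝ H]
    (K : Submodule ℝ H) [CompleteSpace K]
    (F : H → H) (γ : ℝ) (hγ0 : 0 < γ) (hγ1 : γ < 1)
    (hF : ∀ Q Q' : H, ‖F Q - F Q'‖ ≤ γ * ‖Q - Q'‖)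
    (Qstar : H) (hQstar : F Qstar = Qstar)
    (Φr : H) (hΦr : Φr ∈ K)
    (hfix : ((K.orthogonalProjection (F Φr) : K) : H) = Φr) :
    ‖Φr - Qstar‖ ≤
      (Real.sqrt (1 - γ ^ 2))⁻¹ *
        ‖((K.orthogonalProjection Qstar : K) : H) - Qstar‖ := by
  change ‖Φr - Qstar‖ ≤ (√(1 - γ ^ 2))⁻¹ * ‖K.starProjection Qstar - Qstar‖
  have hcontr : ‖Φr - K.starProjection Qstar‖ ≤ γ * ‖Φr - Qstar‖ :=
    K.norm_sub_starProjection_le_of_isFixedPt hF hfix hQstar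
  have hcontr_sq : ‖Φr - K.starProjection Qstar‖ ^ 2 ≤ γ ^ 2 * ‖Φr - Qstar‖ ^ 2 := by
    rw [← mul_pow]; exact pow_le_pow_left₀ (norm_nonneg _) hcontr 2
  have hpyth := K.norm_sub_sq_eq_add_norm_sub_starProjection_sq hΦr Qstar
  exact le_inv_sqrt_mul_of_mul_sq_le_sq (by nlinarith) (norm_nonneg _) (by linarith)

/-- Fixed point error bound under projection: let `Π` be the orthogonal projection onto a closed
subspace `K` of a real Hilbert space, and let `F` be a `γ`-contraction (`γ ∈ (0,1)`) with fixed
point `Q*`. If `Φr* ∈ K` is a fixed point of `Π ∘ F`, then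
`‖Φr* − Q*‖ ≤ (1 − γ²)^{−1/2} ‖ΠQ* − Q*‖`. -/
theorem stmt_11 {H : Type*} [NormedAddCommGroup H] [InnerProductSpace ℝ H] [CompleteSpace H]
    (K : Submodule ℝ H) [CompleteSpace K]
    (F : H → H) (γ : ℝ) (hγ0 : 0 < γ) (hγ1 : γ < 1)
    (hF : ∀ Q Q' : H, ‖F Q - F Q'‖ ≤ γ * ‖Q - Q'‖)
    (Qstar : H) (hQstar : F Qstar = Qstar)
    (Φr : H) (hΦr : Φr ∈ K)
    (hfix : ((K.orthogonalProjection (F Φr) : K) : H) = Φr) :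
    ‖Φr - Qstar‖ ≤
      (Real.sqrt (1 - γ ^ 2))⁻¹ *
        ‖((K.orthogonalProjection Qstar : K) : H) - Qstar‖ :=
  stmt_11_general K F γ hγ0 hγ1 hF Qstar hQstar Φr hΦr hfix
end
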